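/- arXiv:1811.03864 — 5 statements merged into one kernel-verified Lean document; each statement's English description precedes it below -/
import Mathlib

section
/- (Lemma 1, double regularization) Let x̃ ∈ {0, ±d}^n be k-sparse, y = A x̃, and let x⋆ be a global minimizer over [-d,d]^n of the functional F(x) = (1/2)‖y − Ax‖₂² + λd‖x‖₁ − (λ/2)‖x‖₂² with λ > 0. Then (a) ‖x⋆‖₂ ≤ ‖x̃‖₂ and (b) ‖x⋆‖₁ ≤ ‖x̃‖₁. -/
/-!
Write `F = ½‖Ax - y‖² + P` with the concave penalty `P(x) = λd‖x‖₁ - (λ/2)‖x‖₂²`.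
On the box `t² ≤ d|t|` coordinatewise, so `P(x)` dominates both `(λ/2)‖x‖₂²` and `(λd/2)‖x‖₁`;
on the corners `{0, ±d}ⁿ` this is an equality, and `x̃` has zero residual. Hence
`P(x⋆) ≤ F(x⋆) ≤ F(x̃) = P(x̃)` bounds both norms of `x⋆` by those of `x̃`.
-/

open Finset

lemma sq_le_mul_abs_of_abs_le {a d : ℝ} (h : |a| ≤ d) : a ^ 2 ≤ d * |a| := by
  rw [← sq_abs, sq]
  exact mul_le_mul_of_nonneg_right h (abs_nonneg a)

lemma sq_eq_mul_abs_of_mem_corners {a d : ℝ} (hd : 0 ≤ d) (h : a = 0 ∨ a = -d ∨ a = d) :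
    a ^ 2 = d * |a| := by
  rcases h with rfl | rfl | rfl <;> simp [abs_of_nonneg hd, sq]

section Penalty

variable {ι : Type*} [Fintype ι]

noncomputable def penalty (lam d : ℝ) (x : ι → ℝ) : ℝ :=
  lam * d * ∑ i, |x i| - lam / 2 * ∑ i, x i ^ 2

variable {lam d : ℝ} {x : ι → ℝ}

lemma sum_sq_le_mul_sum_abs_of_abs_le (hx : ∀ i, |x i| ≤ d) :
    ∑ i, x i ^ 2 ≤ d * ∑ i, |x i| := by
  rw [mul_sum]
  exact sum_le_sum fun i _ => sq_le_mul_abs_of_abs_le (hx i)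

lemma sum_sq_eq_mul_sum_abs_of_mem_corners (hd : 0 ≤ d)
    (hx : ∀ i, x i = 0 ∨ x i = -d ∨ x i = d) :
    ∑ i, x i ^ 2 = d * ∑ i, |x i| := by
  rw [mul_sum]
  exact sum_congr rfl fun i _ => sq_eq_mul_abs_of_mem_corners hd (hx i)

lemma half_mul_sum_sq_le_penalty (hlam : 0 ≤ lam) (hx : ∀ i, |x i| ≤ d) :
    lam / 2 * ∑ i, x i ^ 2 ≤ penalty lam d x := by
  have := sum_sq_le_mul_sum_abs_of_abs_le hx
  unfold penalty
  nlinarith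

lemma half_mul_sum_abs_le_penalty (hlam : 0 ≤ lam) (hx : ∀ i, |x i| ≤ d) :
    lam * d / 2 * ∑ i, |x i| ≤ penalty lam d x := by
  have := sum_sq_le_mul_sum_abs_of_abs_le hx
  unfold penalty
  nlinarith

lemma penalty_eq_half_mul_sum_sq (hd : 0 ≤ d) (hx : ∀ i, x i = 0 ∨ x i = -d ∨ x i = d) :
    penalty lam d x = lam / 2 * ∑ i, x i ^ 2 := by
  unfold penalty
  rw [sum_sq_eq_mul_sum_abs_of_mem_corners hd hx]
  ring

lemma penalty_eq_half_mul_sum_abs (hd : 0 ≤ d) (hx : ∀ i, x i = 0 ∨ x i = -d ∨ x i = d) :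
    penalty lam d x = lam * d / 2 * ∑ i, |x i| := by
  unfold penalty
  rw [sum_sq_eq_mul_sum_abs_of_mem_corners hd hx]
  ring

end Penalty

theorem stmt_4_general (m n : ℕ) (d lam : ℝ) (hd : 0 < d) (hlam : 0 < lam)
    (A : Matrix (Fin m) (Fin n) ℝ) (xt : Fin n → ℝ)
    (hval : ∀ i, xt i = 0 ∨ xt i = -d ∨ xt i = d)
    (y : Fin m → ℝ) (hy : y = A.mulVec xt)
    (F : (Fin n → ℝ) → ℝ)
    (hF : ∀ x, F x = (1 / 2) * (∑ j, (A.mulVec x j - y j) ^ 2)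
        + lam * d * (∑ i, |x i|) - (lam / 2) * (∑ i, (x i) ^ 2))
    (xs : Fin n → ℝ) (hxs : ∀ i, xs i ∈ Set.Icc (-d) d)
    (hmin : ∀ x : Fin n → ℝ, (∀ i, x i ∈ Set.Icc (-d) d) → F xs ≤ F x) :
    Real.sqrt (∑ i, (xs i) ^ 2) ≤ Real.sqrt (∑ i, (xt i) ^ 2) ∧
    (∑ i, |xs i|) ≤ ∑ i, |xt i| := by
  have hF' : ∀ x, F x = (1 / 2) * (∑ j, (A.mulVec x j - y j) ^ 2) + penalty lam d x := by
    intro x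
    rw [hF, penalty]
    ring
  have hxs_abs : ∀ i, |xs i| ≤ d := fun i => abs_le.mpr (hxs i)
  have hxt_box : ∀ i, xt i ∈ Set.Icc (-d) d := fun i => by
    rcases hval i with h | h | h <;> rw [h] <;> constructor <;> linarith
  have hpen : penalty lam d xs ≤ penalty lam d xt :=
    calc penalty lam d xs
        ≤ F xs := by rw [hF' xs]; exact le_add_of_nonneg_left (by positivity)
      _ ≤ F xt := hmin xt hxt_box
      _ = penalty lam d xt := by simp [hF' xt, hy]
  constructor
  · refine Real.sqrt_le_sqrt (le_of_mul_le_mul_left ?_ (half_pos hlam))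
    calc lam / 2 * ∑ i, xs i ^ 2 ≤ penalty lam d xs :=
        half_mul_sum_sq_le_penalty hlam.le hxs_abs
      _ ≤ penalty lam d xt := hpen
      _ = lam / 2 * ∑ i, xt i ^ 2 := penalty_eq_half_mul_sum_sq hd.le hval
  · refine le_of_mul_le_mul_left ?_ (half_pos (mul_pos hlam hd))
    calc lam * d / 2 * ∑ i, |xs i| ≤ penalty lam d xs :=
        half_mul_sum_abs_le_penalty hlam.le hxs_abs
      _ ≤ penalty lam d xt := hpen
      _ = lam * d / 2 * ∑ i, |xt i| := penalty_eq_half_mul_sum_abs hd.le hval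

theorem stmt_4 (m n k : ℕ) (d lam : ℝ) (hd : 0 < d) (hlam : 0 < lam)
    (A : Matrix (Fin m) (Fin n) ℝ) (xt : Fin n → ℝ)
    (hval : ∀ i, xt i = 0 ∨ xt i = -d ∨ xt i = d)
    (hk : ({i | xt i ≠ 0} : Finset (Fin n)).card = k)
    (y : Fin m → ℝ) (hy : y = A.mulVec xt)
    (F : (Fin n → ℝ) → ℝ)
    (hF : ∀ x, F x = (1 / 2) * (∑ j, (A.mulVec x j - y j) ^ 2)
        + lam * d * (∑ i, |x i|) - (lam / 2) * (∑ i, (x i) ^ 2))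
    (xs : Fin n → ℝ) (hxs : ∀ i, xs i ∈ Set.Icc (-d) d)
    (hmin : ∀ x : Fin n → ℝ, (∀ i, x i ∈ Set.Icc (-d) d) → F xs ≤ F x) :
    Real.sqrt (∑ i, (xs i) ^ 2) ≤ Real.sqrt (∑ i, (xt i) ^ 2) ∧
    (∑ i, |xs i|) ≤ ∑ i, |xt i| :=
  stmt_4_general m n d lam hd hlam A xt hval y hy F hF xs hxs hmin
end

section
/- (Theorem 1) Suppose A ∈ ℝ^{m×n} satisfies the ℓ₂-robust null space property of order k with constants ρ and τ, where τ > 0, λ < τ⁻², and 0 < ρ < √(1 − λτ²). Let x̃ ∈ {0, ±d}^n be k-sparse and y = A x̃. Then x̃ is the unique global minimizer over [-d,d]^n of F(x) = (1/2)‖Ax − y‖₂² + λd‖x‖₁ − (λ/2)‖x‖₂². -/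
private lemma aux_sq (d t s : ℝ) (hd : 0 < d) (ht : |t| ≤ d) (hs : s = -d ∨ s = d) :
    (d - |t|) ^ 2 ≤ (t - s) ^ 2 := by
  have h1 : 0 ≤ d - |t| := by linarith
  have h2 : d - |t| ≤ |t - s| := by
    rcases hs with h | h <;> rw [h] <;>
      cases abs_cases t <;> cases abs_cases (t - - d) <;> cases abs_cases (t - d) <;> linarith
  calc (d - |t|) ^ 2 ≤ |t - s| ^ 2 := by nlinarith [abs_nonneg (t - s)]
    _ = (t - s) ^ 2 := sq_abs _

private lemma aux_main (lam rho tau d b c W : ℝ) (hlam : 0 < lam) (hd : 0 < d)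
    (hrho : 0 < rho) (hrho1 : rho < 1) (hrhosq : rho ^ 2 < 1 - lam * tau ^ 2)
    (hbnn : 0 ≤ b) (hcnn : 0 ≤ c) (hWnn : 0 ≤ W)
    (hLb : W * W ≤ rho * d * b + tau * W * c) (hbc : 0 < b ∨ 0 < c) :
    0 < 1 / 2 * (c * c) + (lam * d / 2 * b - lam / 2 * (W * W)) := by
  have hA : 0 ≤ lam * (1 - rho) * (rho * d * b + tau * W * c - W * W) := by
    apply mul_nonneg (by nlinarith) (by linarith)
  have hB : 0 ≤ lam * ((1 - rho) * W - tau * c) ^ 2 := by positivity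
  have hpos : 0 < 1 - rho ^ 2 := by nlinarith
  rcases hbc with hbpos | hcpos
  · have hC : 0 < lam * d * b * (1 - rho) ^ 2 :=
      mul_pos (mul_pos (mul_pos hlam hd) hbpos) (pow_pos (by linarith) 2)
    have hD : 0 ≤ (1 - rho ^ 2 - lam * tau ^ 2) * (c * c) :=
      mul_nonneg (by nlinarith) (mul_nonneg hcnn hcnn)
    nlinarith [hA, hB, hC, hD, hpos]
  · have hC : 0 ≤ lam * d * b * (1 - rho) ^ 2 := by positivity
    have hD : 0 < (1 - rho ^ 2 - lam * tau ^ 2) * (c * c) :=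
      mul_pos (by nlinarith) (mul_pos hcpos hcpos)
    nlinarith [hA, hB, hC, hD, hpos]

set_option maxHeartbeats 1000000 in
theorem stmt_7 (m n k : ℕ) (d lam rho tau : ℝ) (hd : 0 < d) (hlam : 0 < lam)
    (htau : 0 < tau) (hlt : lam < tau⁻¹ ^ 2) (hrho : 0 < rho)
    (hrho2 : rho < Real.sqrt (1 - lam * tau ^ 2))
    (A : Matrix (Fin m) (Fin n) ℝ)
    (hRNSP : ∀ (v : Fin n → ℝ) (S : Finset (Fin n)), S.card ≤ k →
      Real.sqrt (∑ i ∈ S, (v i) ^ 2) ≤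
        (rho / Real.sqrt k) * (∑ i ∈ Sᶜ, |v i|)
          + tau * Real.sqrt (∑ j, (A.mulVec v j) ^ 2))
    (xt : Fin n → ℝ) (hval : ∀ i, xt i = 0 ∨ xt i = -d ∨ xt i = d)
    (hk : ({i | xt i ≠ 0} : Finset (Fin n)).card ≤ k)
    (y : Fin m → ℝ) (hy : y = A.mulVec xt)
    (F : (Fin n → ℝ) → ℝ)
    (hF : ∀ x, F x = (1 / 2) * (∑ j, (A.mulVec x j - y j) ^ 2)
        + lam * d * (∑ i, |x i|) - (lam / 2) * (∑ i, (x i) ^ 2)) :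
    (∀ i, xt i ∈ Set.Icc (-d) d) ∧
    (∀ x : Fin n → ℝ, (∀ i, x i ∈ Set.Icc (-d) d) → x ≠ xt → F xt < F x) := by
  have htau2 : (0:ℝ) < tau ^ 2 := by positivity
  have hlt1 : lam * tau ^ 2 < 1 := by
    have h := mul_lt_mul_of_pos_right hlt htau2
    have : tau⁻¹ ^ 2 * tau ^ 2 = 1 := by field_simp
    linarith
  have h1lt : (0:ℝ) < 1 - lam * tau ^ 2 := by linarith
  have hrho1 : rho < 1 := by
    have : Real.sqrt (1 - lam * tau ^ 2) ≤ 1 := Real.sqrt_le_one.2 (by nlinarith [mul_pos hlam htau2])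
    linarith
  have hrhosq : rho ^ 2 < 1 - lam * tau ^ 2 := by
    nlinarith [Real.sq_sqrt h1lt.le, Real.sqrt_nonneg (1 - lam * tau ^ 2)]
  constructor
  · intro i
    rcases hval i with h | h | h <;> rw [h] <;> constructor <;> linarith
  · intro x hbox hne
    subst hy
    obtain ⟨S, hS⟩ : ∃ S : Finset (Fin n), S = ({i | xt i ≠ 0} : Finset (Fin n)) := ⟨_, rfl⟩
    rw [← hS] at hk
    have hmemS : ∀ i ∈ S, xt i = -d ∨ xt i = d := by
      intro i hi
      rw [hS] at hi
      have h0 : xt i ≠ 0 := by simpa using hi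
      rcases hval i with h | h | h
      · exact absurd h h0
      · exact Or.inl h
      · exact Or.inr h
    have hmemSc : ∀ i ∈ Sᶜ, xt i = 0 := by
      intro i hi
      rw [hS] at hi
      have : ¬ xt i ≠ 0 := by simpa using hi
      exact not_not.1 this
    obtain ⟨v, hv⟩ : ∃ v : Fin n → ℝ, v = fun i => x i - xt i := ⟨_, rfl⟩
    have hvx : ∀ i, v i = x i - xt i := fun i => by rw [hv]
    have habs : ∀ i, |x i| ≤ d := fun i => abs_le.2 ⟨(hbox i).1, (hbox i).2⟩
    have hAv : ∀ j, A.mulVec x j - A.mulVec xt j = A.mulVec v j := by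
      intro j
      have : v = x - xt := by funext i; rw [hvx i]; rfl
      rw [this, Matrix.mulVec_sub]
      rfl
    obtain ⟨c2, hc2⟩ : ∃ c2 : ℝ, c2 = ∑ j, (A.mulVec v j) ^ 2 := ⟨_, rfl⟩
    have hc2nn : 0 ≤ c2 := hc2 ▸ Finset.sum_nonneg fun j _ => sq_nonneg _
    obtain ⟨c, hc⟩ : ∃ c : ℝ, c = Real.sqrt c2 := ⟨_, rfl⟩
    have hcnn : 0 ≤ c := hc ▸ Real.sqrt_nonneg _
    have hcsq : c * c = c2 := by rw [hc]; exact Real.mul_self_sqrt hc2nn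
    obtain ⟨b, hb⟩ : ∃ b : ℝ, b = ∑ i ∈ Sᶜ, |v i| := ⟨_, rfl⟩
    have hbnn : 0 ≤ b := hb ▸ Finset.sum_nonneg fun i _ => abs_nonneg _
    obtain ⟨L, hL⟩ : ∃ L : ℝ, L = ∑ i ∈ S, (d - |x i|) ^ 2 := ⟨_, rfl⟩
    have hLnn : 0 ≤ L := hL ▸ Finset.sum_nonneg fun i _ => sq_nonneg _
    obtain ⟨W, hW⟩ : ∃ W : ℝ, W = Real.sqrt L := ⟨_, rfl⟩
    have hWnn : 0 ≤ W := hW ▸ Real.sqrt_nonneg _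
    have hWsq : W * W = L := by rw [hW]; exact Real.mul_self_sqrt hLnn
    obtain ⟨a, ha⟩ : ∃ a : ℝ, a = Real.sqrt (∑ i ∈ S, (v i) ^ 2) := ⟨_, rfl⟩
    have hann : 0 ≤ a := ha ▸ Real.sqrt_nonneg _
    have hRa : a ≤ rho / Real.sqrt k * b + tau * c := by
      rw [ha, hb, hc, hc2]
      exact hRNSP v S hk
    have hWa : W ≤ a := by
      rw [hW, ha]
      apply Real.sqrt_le_sqrt
      rw [hL]
      apply Finset.sum_le_sum
      intro i hi
      rw [hvx i]
      exact aux_sq d (x i) (xt i) hd (habs i) (hmemS i hi)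
    have hWkd : W ≤ Real.sqrt k * d := by
      have hLk : L ≤ (k : ℝ) * d ^ 2 := by
        rw [hL]
        calc ∑ i ∈ S, (d - |x i|) ^ 2 ≤ ∑ _i ∈ S, d ^ 2 := by
              apply Finset.sum_le_sum
              intro i hi
              have h1 : 0 ≤ d - |x i| := by linarith [habs i]
              nlinarith [abs_nonneg (x i)]
          _ = (S.card : ℝ) * d ^ 2 := by rw [Finset.sum_const]; push_cast; ring
          _ ≤ (k : ℝ) * d ^ 2 := by
              apply mul_le_mul_of_nonneg_right _ (sq_nonneg d)
              exact_mod_cast hk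
      calc W ≤ Real.sqrt ((k : ℝ) * d ^ 2) := by
            rw [hW]; exact Real.sqrt_le_sqrt hLk
        _ = Real.sqrt k * d := by
            rw [Real.sqrt_mul (Nat.cast_nonneg k), Real.sqrt_sq hd.le]
    have hfrac : rho / Real.sqrt k * W ≤ rho * d := by
      have hq : Real.sqrt (k:ℝ) / Real.sqrt (k:ℝ) ≤ 1 := by
        rcases eq_or_ne (Real.sqrt (k:ℝ)) 0 with h | h
        · simp [h]
        · simp [div_self h]
      calc rho / Real.sqrt k * W ≤ rho / Real.sqrt k * (Real.sqrt k * d) := by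
            apply mul_le_mul_of_nonneg_left hWkd (by positivity)
        _ = rho * d * (Real.sqrt (k:ℝ) / Real.sqrt (k:ℝ)) := by ring
        _ ≤ rho * d * 1 := by
            apply mul_le_mul_of_nonneg_left hq (by positivity)
        _ = rho * d := by ring
    have hLbound : W * W ≤ rho * d * b + tau * W * c := by
      calc W * W ≤ W * a := mul_le_mul_of_nonneg_left hWa hWnn
        _ ≤ W * (rho / Real.sqrt k * b + tau * c) :=
            mul_le_mul_of_nonneg_left hRa hWnn
        _ = (rho / Real.sqrt k * W) * b + tau * W * c := by ring
        _ ≤ rho * d * b + tau * W * c := by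
            have := mul_le_mul_of_nonneg_right hfrac hbnn
            linarith
    have hbc : 0 < b ∨ 0 < c := by
      by_contra h
      push_neg at h
      have hb0 : b = 0 := le_antisymm h.1 hbnn
      have hc0 : c = 0 := le_antisymm h.2 hcnn
      have ha0 : a = 0 := by
        have h2 : a ≤ 0 := by
          calc a ≤ rho / Real.sqrt k * b + tau * c := hRa
            _ = 0 := by rw [hb0, hc0]; ring
        exact le_antisymm h2 hann
      have hsum0 : ∑ i ∈ S, (v i) ^ 2 = 0 := by
        have hnn : 0 ≤ ∑ i ∈ S, (v i) ^ 2 := Finset.sum_nonneg fun i _ => sq_nonneg _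
        rw [ha] at ha0
        exact (Real.sqrt_eq_zero hnn).1 ha0
      have hbsum0 : ∑ i ∈ Sᶜ, |v i| = 0 := hb ▸ hb0
      have hvz : ∀ i, v i = 0 := by
        intro i
        by_cases hi : i ∈ S
        · have := (Finset.sum_eq_zero_iff_of_nonneg (fun j _ => sq_nonneg (v j))).1 hsum0 i hi
          exact (pow_eq_zero_iff (by norm_num : (2:ℕ) ≠ 0)).1 this
        · have hi' : i ∈ Sᶜ := Finset.mem_compl.2 hi
          have h2 := (Finset.sum_eq_zero_iff_of_nonneg (fun j _ => abs_nonneg (v j))).1 hbsum0 i hi'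
          exact abs_eq_zero.1 h2
      apply hne
      funext i
      have h3 := hvz i
      rw [hvx i] at h3
      linarith
    obtain ⟨G, hG⟩ : ∃ G : Fin n → ℝ, G = fun i =>
        lam * d * |x i| - lam / 2 * (x i) ^ 2 - (lam * d * |xt i| - lam / 2 * (xt i) ^ 2) :=
      ⟨_, rfl⟩
    have hGsum : ∑ i, G i =
        (lam * d * (∑ i, |x i|) - lam / 2 * (∑ i, (x i) ^ 2))
          - (lam * d * (∑ i, |xt i|) - lam / 2 * (∑ i, (xt i) ^ 2)) := by
      simp only [hG, Finset.sum_sub_distrib, Finset.mul_sum]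
    have hGlower : lam * d / 2 * b - lam / 2 * L ≤ ∑ i, G i := by
      rw [← Finset.sum_add_sum_compl S G]
      have hS1 : ∑ i ∈ S, G i = - (lam / 2) * L := by
        rw [hL, Finset.mul_sum]
        apply Finset.sum_congr rfl
        intro i hi
        have hd' : |xt i| = d := by
          rcases hmemS i hi with h | h <;> rw [h]
          · rw [abs_neg, abs_of_pos hd]
          · rw [abs_of_pos hd]
        have hsq : (xt i) ^ 2 = d ^ 2 := by
          rcases hmemS i hi with h | h <;> rw [h] <;> ring
        rw [hG]
        simp only
        rw [hd', hsq, show (x i) ^ 2 = |x i| ^ 2 from (sq_abs _).symm]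
        ring
      have hS2 : lam * d / 2 * b ≤ ∑ i ∈ Sᶜ, G i := by
        rw [hb, Finset.mul_sum]
        apply Finset.sum_le_sum
        intro i hi
        have h0 : xt i = 0 := hmemSc i hi
        have hvi : |v i| = |x i| := by rw [hvx i, h0, sub_zero]
        rw [hG]
        simp only
        rw [h0, hvi, abs_zero, show (x i) ^ 2 = |x i| ^ 2 from (sq_abs _).symm]
        nlinarith [mul_nonneg (mul_nonneg hlam.le (abs_nonneg (x i)))
          (sub_nonneg.2 (habs i)), hlam.le, hd.le]
      linarith
    have hmain : 0 < 1 / 2 * (c * c) + (lam * d / 2 * b - lam / 2 * (W * W)) :=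
      aux_main lam rho tau d b c W hlam hd hrho hrho1 hrhosq hbnn hcnn hWnn hLbound hbc
    rw [hF x, hF xt]
    have h0 : ∑ j, (A.mulVec xt j - A.mulVec xt j) ^ 2 = (0:ℝ) := by simp
    have hAx : ∑ j, (A.mulVec x j - A.mulVec xt j) ^ 2 = c2 := by
      rw [hc2]
      exact Finset.sum_congr rfl fun j _ => by rw [hAv j]
    rw [h0, hAx]
    rw [hWsq] at hmain
    rw [hcsq] at hmain
    linarith [hGsum, hGlower, hmain]
end

section
/- (Generic-alphabet penalty term bound) Let d > 0, q ∈ ℕ, x̃ᵢ ∈ d·{0, ±1, …, ±q} with x̃ᵢ > 0, and hᵢ ∈ ℝ with x̃ᵢ + hᵢ ∈ [-qd, qd]. Define β(t) = min{α ∈ d·{0,1,…,q} : |t| ≤ α}. Then r := β(x̃ᵢ + hᵢ)·|x̃ᵢ + hᵢ| − x̃ᵢ² − x̃ᵢ hᵢ ≥ −(q−1)·hᵢ². -/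
noncomputable def mcpBeta (d : ℝ) (q : ℕ) (t : ℝ) : ℝ :=
  sInf {a : ℝ | (∃ j : ℕ, j ≤ q ∧ a = d * j) ∧ |t| ≤ a}

theorem stmt_13 (d : ℝ) (q : ℕ) (hd : 0 < d) (xt h : ℝ)
    (hx : ∃ j : ℤ, |j| ≤ (q : ℤ) ∧ xt = d * j) (hxpos : 0 < xt)
    (hbox : xt + h ∈ Set.Icc (-(q * d)) (q * d)) :
    mcpBeta d q (xt + h) * |xt + h| - xt ^ 2 - xt * h ≥ -((q : ℝ) - 1) * h ^ 2 := by
  obtain ⟨j, hjq, hxt⟩ := hx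
  have hj0 : 0 < j := by
    by_contra hc
    push_neg at hc
    have : (j : ℝ) ≤ 0 := by exact_mod_cast hc
    nlinarith
  set k := j.toNat with hk
  have hkj : (k : ℤ) = j := Int.toNat_of_nonneg hj0.le
  have hxtk : xt = d * k := by
    rw [hxt]; congr 1; exact_mod_cast hkj.symm
  have hk1 : 1 ≤ k := by omega
  have hkq : k ≤ q := by
    have : (k : ℤ) ≤ q := hkj ▸ (le_trans (le_abs_self j) hjq)
    exact_mod_cast this
  have hkqR : (k : ℝ) ≤ q := by exact_mod_cast hkq
  have hq1 : (1 : ℝ) ≤ q := by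
    have : 1 ≤ q := le_trans hk1 hkq
    exact_mod_cast this
  obtain ⟨hlo, hhi⟩ := hbox
  have habs : |xt + h| ≤ d * q := by
    rw [abs_le]; constructor <;> nlinarith
  have hmem : d * q ∈ {a : ℝ | (∃ j : ℕ, j ≤ q ∧ a = d * j) ∧ |xt + h| ≤ a} :=
    ⟨⟨q, le_rfl, rfl⟩, habs⟩
  have hne : Set.Nonempty {a : ℝ | (∃ j : ℕ, j ≤ q ∧ a = d * j) ∧ |xt + h| ≤ a} := ⟨_, hmem⟩
  have hbeta_abs : |xt + h| ≤ mcpBeta d q (xt + h) :=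
    le_csInf hne (fun a ha => ha.2)
  rcases le_or_gt h (-d) with hcase | hcase
  · -- h ≤ -d : use β ≥ |t|
    have h1 : |xt + h| * |xt + h| ≤ mcpBeta d q (xt + h) * |xt + h| :=
      mul_le_mul_of_nonneg_right hbeta_abs (abs_nonneg _)
    have h2 : |xt + h| * |xt + h| = (xt + h) ^ 2 := by
      rw [← sq, sq_abs]
    rw [h2] at h1
    -- h(xt + q h) ≥ 0
    have hA : xt + q * h ≤ 0 := by nlinarith
    have hprod : 0 ≤ h * (xt + q * h) := by
      have hh : h ≤ 0 := by nlinarith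
      nlinarith
    nlinarith
  · -- h > -d : β ≥ xt
    have htpos : 0 < xt + h := by
      have : d ≤ xt := by
        have : (1 : ℝ) ≤ k := by exact_mod_cast hk1
        nlinarith
      linarith
    have habt : |xt + h| = xt + h := abs_of_pos htpos
    have hbeta_xt : xt ≤ mcpBeta d q (xt + h) := by
      apply le_csInf hne
      rintro a ⟨⟨m, hmq, rfl⟩, hta⟩
      rw [habt] at hta
      have hmk : (k : ℝ) - 1 < m := by
        have hdm : d * ((k : ℝ) - 1) < d * m := by nlinarith
        exact lt_of_mul_lt_mul_left hdm hd.le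
      have : k ≤ m := by
        have : (k : ℝ) < m + 1 := by linarith
        have : k < m + 1 := by exact_mod_cast this
        omega
      have : (k : ℝ) ≤ m := by exact_mod_cast this
      rw [hxtk]
      nlinarith
    have h1 : xt * (xt + h) ≤ mcpBeta d q (xt + h) * (xt + h) :=
      mul_le_mul_of_nonneg_right hbeta_xt htpos.le
    rw [habt]
    nlinarith
end

section
/- (Theorem 3) Let 𝒜 = d·{0, ±1, …, ±q}, x̃ ∈ 𝒜ⁿ be k-sparse, y = A x̃. Suppose A satisfies the ℓ₂-RNSP of order k with τ > 0 and ρ ∈ (0, √(1 − 2qλτ²)/(2q²)), and λ < 1/(2qτ²). Then x̃ is the unique global minimizer over [-qd, qd]^n of H(x) = (1/2)‖Ax − y‖₂² + λΣᵢ βᵢ(xᵢ)|xᵢ| − (λ/2)‖x‖₂², where βᵢ(xᵢ) = min{α ∈ d·{0,…,q} : |xᵢ| ≤ α}. -/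
lemma mcpBeta_neg (d : ℝ) (q : ℕ) (t : ℝ) : mcpBeta d q (-t) = mcpBeta d q t := by
  unfold mcpBeta; rw [abs_neg]

lemma mcpBeta_set_nonempty {d : ℝ} {q : ℕ} {t : ℝ} (hd : 0 < d) (ht : |t| ≤ q * d) :
    {a : ℝ | (∃ j : ℕ, j ≤ q ∧ a = d * j) ∧ |t| ≤ a}.Nonempty := by
  exact ⟨d * q, ⟨⟨q, le_refl q, rfl⟩, by linarith [mul_comm (q : ℝ) d]⟩⟩

lemma mcpBeta_bddBelow {d : ℝ} {q : ℕ} {t : ℝ} (hd : 0 < d) :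
    BddBelow {a : ℝ | (∃ j : ℕ, j ≤ q ∧ a = d * j) ∧ |t| ≤ a} := by
  refine ⟨0, fun a ha => ?_⟩
  obtain ⟨⟨j, _, rfl⟩, _⟩ := ha
  positivity

lemma abs_le_mcpBeta {d : ℝ} {q : ℕ} {t : ℝ} (hd : 0 < d) (ht : |t| ≤ q * d) :
    |t| ≤ mcpBeta d q t :=
  le_csInf (mcpBeta_set_nonempty hd ht) (fun _ ha => ha.2)

lemma d_le_mcpBeta {d : ℝ} {q : ℕ} {t : ℝ} (hd : 0 < d) (ht : |t| ≤ q * d) (ht0 : t ≠ 0) :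
    d ≤ mcpBeta d q t := by
  refine le_csInf (mcpBeta_set_nonempty hd ht) (fun a ha => ?_)
  obtain ⟨⟨j, _, rfl⟩, hle⟩ := ha
  have h0 : 0 < |t| := abs_pos.mpr ht0
  have hj : 1 ≤ j := by
    by_contra hc
    push_neg at hc
    interval_cases j
    simp at hle
    exact ht0 hle
  have : (1 : ℝ) ≤ j := by exact_mod_cast hj
  nlinarith

lemma mcpBeta_grid {d : ℝ} {q : ℕ} {t : ℝ} (hd : 0 < d) (j : ℕ) (hjq : j ≤ q)
    (ht : |t| = d * j) : mcpBeta d q t = |t| := by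
  have hb : |t| ≤ q * d := by
    rw [ht]
    have : (j : ℝ) ≤ q := by exact_mod_cast hjq
    nlinarith
  refine le_antisymm ?_ (abs_le_mcpBeta hd hb)
  exact csInf_le (mcpBeta_bddBelow hd) ⟨⟨j, hjq, ht⟩, le_refl _⟩

-- if t ∈ (d*(j-1), d*j) with 1 ≤ j ≤ q then mcpBeta ≥ d*j
lemma mcpBeta_piece {d : ℝ} {q : ℕ} {t : ℝ} (hd : 0 < d) (j : ℕ) (hj1 : 1 ≤ j) (hjq : j ≤ q)
    (hlo : d * j - d < t) (hhi : t < d * j) :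
    d * j ≤ mcpBeta d q t := by
  have htpos : 0 < t := by
    have : (1:ℝ) ≤ (j:ℝ) := by exact_mod_cast hj1
    nlinarith
  have habs : |t| = t := abs_of_pos htpos
  have hb : |t| ≤ q * d := by
    have : (j : ℝ) ≤ q := by exact_mod_cast hjq
    rw [habs]; nlinarith
  refine le_csInf (mcpBeta_set_nonempty hd hb) (fun a ha => ?_)
  obtain ⟨⟨m, _, rfl⟩, hle⟩ := ha
  rw [habs] at hle
  -- d*m ≥ t > d*(j-1)  ⇒ m ≥ j
  have hmj : j ≤ m := by
    by_contra hc
    push_neg at hc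
    have : (m : ℝ) ≤ (j : ℝ) - 1 := by
      have : m + 1 ≤ j := hc
      have := (Nat.cast_le (α := ℝ)).mpr this
      push_cast at this ⊢
      linarith
    nlinarith
  have : (j : ℝ) ≤ m := by exact_mod_cast hmj
  nlinarith
-- φ t := mcpBeta d q t * |t| - t^2/2
lemma phi_ge_sq {d : ℝ} {q : ℕ} {t : ℝ} (hd : 0 < d) (ht : |t| ≤ q * d) :
    t ^ 2 / 2 ≤ mcpBeta d q t * |t| - t ^ 2 / 2 := by
  have h := abs_le_mcpBeta hd ht
  have h0 : 0 ≤ |t| := abs_nonneg t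
  nlinarith [sq_abs t]

lemma phi_nonneg {d : ℝ} {q : ℕ} {t : ℝ} (hd : 0 < d) (ht : |t| ≤ q * d) :
    0 ≤ mcpBeta d q t * |t| - t ^ 2 / 2 := by
  have := phi_ge_sq hd ht; have h0 : (0:ℝ) ≤ t^2/2 := by positivity
  linarith

lemma phi_ge_lin {d : ℝ} {q : ℕ} {t : ℝ} (hd : 0 < d) (ht : |t| ≤ q * d) :
    d / 2 * |t| ≤ mcpBeta d q t * |t| - t ^ 2 / 2 := by
  rcases eq_or_ne t 0 with rfl | ht0
  · simp
  · have h1 := phi_ge_sq hd ht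
    have h2 := d_le_mcpBeta hd ht ht0
    have h0 : 0 < |t| := abs_pos.mpr ht0
    nlinarith [sq_abs t]

lemma phi_grid {d : ℝ} {q : ℕ} {t : ℝ} (hd : 0 < d) (j : ℕ) (hjq : j ≤ q)
    (ht : |t| = d * j) : mcpBeta d q t * |t| = t ^ 2 := by
  rw [mcpBeta_grid hd j hjq ht, ← sq_abs, sq]

-- master support bound, positive grid point a = d*j, 1 ≤ j ≤ q
lemma master_pos {d : ℝ} {q : ℕ} (hd : 0 < d) (j : ℕ) (hj1 : 1 ≤ j) (hjq : j ≤ q)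
    (x : ℝ) (hx : |x| ≤ q * d) :
    -(q : ℝ) * (x - d * j) ^ 2 ≤
      (mcpBeta d q x * |x| - x ^ 2 / 2) - (d * j) ^ 2 / 2 := by
  have hjR : (1:ℝ) ≤ (j:ℝ) := by exact_mod_cast hj1
  have hjq' : (j:ℝ) ≤ (q:ℝ) := by exact_mod_cast hjq
  have hqR : (1:ℝ) ≤ (q:ℝ) := le_trans hjR hjq'
  rcases le_or_gt (d * j) x with hc1 | hc1
  · -- x ≥ a
    have h1 := phi_ge_sq hd hx
    have ha : 0 < d * j := by nlinarith
    nlinarith [sq_nonneg (x - d * j)]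
  rcases lt_or_ge (d * j - d) x with hc2 | hc2
  · -- same piece
    have hb := mcpBeta_piece hd j hj1 hjq hc2 hc1
    have hxpos : 0 < x := by nlinarith
    have habs : |x| = x := abs_of_pos hxpos
    rw [habs]
    nlinarith [sq_nonneg (x - d * j)]
  · -- x ≤ a - d
    have h1 := phi_ge_sq hd hx
    -- need x^2/2 - (dj)^2/2 ≥ -q (x - dj)^2
    -- u := dj - x ≥ d; (dj)^2 - x^2 = u(2dj - u) ≤ 2q u^2
    have hu : d ≤ d * j - x := by linarith
    have hdj : d * j ≤ q * d := by nlinarith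
    rcases le_or_gt (2 * (d * j)) (d * j - x) with hcc | hcc
    · nlinarith [sq_nonneg (d * j - x)]
    · have hu0 : 0 < d * j - x := lt_of_lt_of_le hd hu
      have key : 2 * (d * j) ≤ 2 * q * (d * j - x) := by nlinarith
      nlinarith [mul_le_mul_of_nonneg_left key hu0.le, sq_nonneg (d * j - x)]
lemma master_int {d : ℝ} {q : ℕ} (hd : 0 < d) (j : ℤ) (hj0 : j ≠ 0) (hjq : |j| ≤ (q:ℤ))
    (x : ℝ) (hx : |x| ≤ q * d) :
    -(q:ℝ) * (x - d * j) ^ 2 ≤ (mcpBeta d q x * |x| - x ^ 2 / 2) - (d * j) ^ 2 / 2 := by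
  obtain ⟨hjl, hjr⟩ := abs_le.mp hjq
  rcases lt_or_gt_of_ne hj0 with hneg | hpos
  · have hjn1 : 1 ≤ (-j).toNat := by omega
    have hjnq : (-j).toNat ≤ q := by omega
    have hcast : (((-j).toNat : ℕ) : ℝ) = -(j : ℝ) := by
      have h1 : (((-j).toNat : ℕ) : ℤ) = -j := Int.toNat_of_nonneg (by omega)
      exact_mod_cast congrArg (Int.cast : ℤ → ℝ) h1
    have h := master_pos hd (-j).toNat hjn1 hjnq (-x) (by rwa [abs_neg])
    rw [mcpBeta_neg, abs_neg, hcast] at h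
    ring_nf at h ⊢
    linarith
  · have hjn1 : 1 ≤ j.toNat := by omega
    have hjnq : j.toNat ≤ q := by omega
    have hcast : ((j.toNat : ℕ) : ℝ) = (j : ℝ) := by
      have h1 : ((j.toNat : ℕ) : ℤ) = j := Int.toNat_of_nonneg (by omega)
      exact_mod_cast congrArg (Int.cast : ℤ → ℝ) h1
    have h := master_pos hd j.toNat hjn1 hjnq x hx
    rw [hcast] at h
    exact h
set_option maxHeartbeats 1000000 in
theorem stmt_14 (m n k : ℕ) (q : ℕ) (d lam rho tau : ℝ) (hd : 0 < d)
    (hlam : 0 < lam) (htau : 0 < tau) (hlamq : lam < 1 / (2 * q * tau ^ 2))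
    (hrho : 0 < rho)
    (hrho2 : rho < Real.sqrt (1 - 2 * q * lam * tau ^ 2) / (2 * q ^ 2))
    (A : Matrix (Fin m) (Fin n) ℝ)
    (hRNSP : ∀ (v : Fin n → ℝ) (S : Finset (Fin n)), S.card ≤ k →
      Real.sqrt (∑ i ∈ S, (v i) ^ 2) ≤
        (rho / Real.sqrt k) * (∑ i ∈ Sᶜ, |v i|)
          + tau * Real.sqrt (∑ j, (A.mulVec v j) ^ 2))
    (xt : Fin n → ℝ) (hval : ∀ i, ∃ j : ℤ, |j| ≤ (q : ℤ) ∧ xt i = d * j)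
    (hk : ({i | xt i ≠ 0} : Finset (Fin n)).card ≤ k)
    (y : Fin m → ℝ) (hy : y = A.mulVec xt)
    (H : (Fin n → ℝ) → ℝ)
    (hH : ∀ x, H x = (1 / 2) * (∑ j, (A.mulVec x j - y j) ^ 2)
        + lam * (∑ i, mcpBeta d q (x i) * |x i|)
        - (lam / 2) * (∑ i, (x i) ^ 2)) :
    (∀ i, xt i ∈ Set.Icc (-(q * d)) (q * d)) ∧
    (∀ x : Fin n → ℝ, (∀ i, x i ∈ Set.Icc (-(q * d)) (q * d)) → x ≠ xt →
      H xt < H x) := by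
  -- q = 0 is impossible
  rcases Nat.eq_zero_or_pos q with rfl | hqpos
  · exfalso
    norm_num at hrho2
    linarith
  have hq1R : (1:ℝ) ≤ (q:ℝ) := by exact_mod_cast hqpos
  -- bound on xt
  have hxtb : ∀ i, |xt i| ≤ q * d := by
    intro i
    obtain ⟨j, hj, hij⟩ := hval i
    have hj' : |(j:ℝ)| ≤ (q:ℝ) := by
      have h1 : ((|j|:ℤ):ℝ) ≤ ((q:ℤ):ℝ) := by exact_mod_cast hj
      rw [Int.cast_abs] at h1
      exact_mod_cast h1
    rw [hij, abs_mul, abs_of_pos hd]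
    nlinarith [abs_nonneg (j:ℝ)]
  have hgrid : ∀ i, mcpBeta d q (xt i) * |xt i| = (xt i) ^ 2 := by
    intro i
    obtain ⟨j, hj, hij⟩ := hval i
    have hnq : j.natAbs ≤ q := by
      obtain ⟨h1, h2⟩ := abs_le.mp hj; omega
    have habs : |xt i| = d * (j.natAbs : ℝ) := by
      rw [hij, abs_mul, abs_of_pos hd]
      congr 1
      rw [Nat.cast_natAbs, Int.cast_abs]
    exact phi_grid hd j.natAbs hnq habs
  constructor
  · intro i
    rw [Set.mem_Icc]
    exact abs_le.mp (hxtb i)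
  intro x hbox hne
  have hxb : ∀ i, |x i| ≤ q * d := fun i => abs_le.mpr (by
    have := hbox i; rw [Set.mem_Icc] at this; exact this)
  set S : Finset (Fin n) := ({i | xt i ≠ 0} : Finset (Fin n)) with hS
  have hmem : ∀ i, i ∈ S ↔ xt i ≠ 0 := by intro i; rw [hS]; simp
  set v : Fin n → ℝ := x - xt with hv
  have hvi : ∀ i, v i = x i - xt i := fun i => rfl
  clear_value v
  clear_value S
  set L : ℝ := ∑ i ∈ Sᶜ, |v i| with hL
  set W : ℝ := ∑ i ∈ S, (v i) ^ 2 with hW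
  set z2 : ℝ := ∑ j, (A.mulVec v j) ^ 2 with hz2
  have hL0 : 0 ≤ L := Finset.sum_nonneg (fun i _ => abs_nonneg _)
  have hW0 : 0 ≤ W := Finset.sum_nonneg (fun i _ => sq_nonneg _)
  have hz20 : 0 ≤ z2 := Finset.sum_nonneg (fun i _ => sq_nonneg _)
  set ψ : Fin n → ℝ := fun i => mcpBeta d q (x i) * |x i| - (x i) ^ 2 / 2 - (xt i) ^ 2 / 2
    with hψ
  clear_value L W z2 ψ
  -- difference formula
  have hdiff : H x - H xt = (1/2) * z2 + lam * ∑ i, ψ i := by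
    have hAv : ∀ jj, A.mulVec x jj - y jj = A.mulVec v jj := by
      intro jj
      rw [hy, hv, Matrix.mulVec_sub]
      rfl
    have e1 : ∑ jj, (A.mulVec x jj - y jj) ^ 2 = z2 := by
      rw [hz2]; exact Finset.sum_congr rfl (fun jj _ => by rw [hAv])
    have e2 : ∑ jj, (A.mulVec xt jj - y jj) ^ 2 = 0 := by
      rw [hy]; simp
    have e3 : ∑ i, mcpBeta d q (xt i) * |xt i| = ∑ i, (xt i) ^ 2 :=
      Finset.sum_congr rfl (fun i _ => hgrid i)
    have e4 : ∑ i, ψ i = (∑ i, mcpBeta d q (x i) * |x i|)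
        - (∑ i, (x i) ^ 2) / 2 - (∑ i, (xt i) ^ 2) / 2 := by
      simp only [hψ, Finset.sum_sub_distrib]
      rw [Finset.sum_div, Finset.sum_div]
    rw [hH x, hH xt, e1, e2, e3, e4]
    ring
  -- pointwise bounds
  have hψSc : ∀ i ∈ Sᶜ, d / 2 * |v i| ≤ ψ i := by
    intro i hi
    have hxt0 : xt i = 0 := by
      have := Finset.mem_compl.mp hi
      rw [hmem i] at this
      tauto
    have hvx : v i = x i := by rw [hvi i, hxt0, sub_zero]
    simp only [hψ, hxt0, hvx]
    have := phi_ge_lin hd (hxb i)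
    norm_num
    linarith
  have hψS : ∀ i ∈ S, -(q:ℝ) * (v i) ^ 2 ≤ ψ i := by
    intro i hi
    obtain ⟨j, hj, hij⟩ := hval i
    have hxt0 : xt i ≠ 0 := (hmem i).mp hi
    have hj0 : j ≠ 0 := by
      intro h; rw [h] at hij; simp at hij; exact hxt0 hij
    have h := master_int hd j hj0 hj (x i) (hxb i)
    simp only [hψ]
    rw [hvi i, hij]
    linarith [h]
  have hψS2 : ∀ i ∈ S, -((q * d) ^ 2 / 2) ≤ ψ i := by
    intro i _
    have h1 := phi_nonneg hd (hxb i)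
    have h2 : (xt i) ^ 2 ≤ (q * d) ^ 2 := by
      rw [← sq_abs (xt i)]
      apply pow_le_pow_left₀ (abs_nonneg _) (hxtb i)
    simp only [hψ]
    linarith
  -- lower bounds on H x - H xt
  have hsplit : ∑ i, ψ i = ∑ i ∈ S, ψ i + ∑ i ∈ Sᶜ, ψ i :=
    (Finset.sum_add_sum_compl S ψ).symm
  have hScsum : d / 2 * L ≤ ∑ i ∈ Sᶜ, ψ i := by
    rw [hL, Finset.mul_sum]
    exact Finset.sum_le_sum hψSc
  have hlow1 : (1/2) * z2 + lam * (d / 2 * L - q * W) ≤ H x - H xt := by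
    have h2 : -(q:ℝ) * W ≤ ∑ i ∈ S, ψ i := by
      rw [hW, Finset.mul_sum]
      exact Finset.sum_le_sum hψS
    have hsum : d / 2 * L - q * W ≤ ∑ i, ψ i := by
      rw [hsplit]; linarith
    rw [hdiff]
    linarith only [mul_le_mul_of_nonneg_left hsum hlam.le]
  have hlow2 : lam * (d / 2 * L - k * ((q * d) ^ 2 / 2)) ≤ H x - H xt := by
    have h2 : -((k:ℝ)) * ((q * d) ^ 2 / 2) ≤ ∑ i ∈ S, ψ i := by
      have hc := Finset.card_nsmul_le_sum S ψ _ hψS2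
      rw [nsmul_eq_mul] at hc
      have hcard : (S.card : ℝ) ≤ (k : ℝ) := by exact_mod_cast hk
      have hnn : (0:ℝ) ≤ (q * d) ^ 2 / 2 := by positivity
      nlinarith
    have hsum : d / 2 * L - k * ((q * d) ^ 2 / 2) ≤ ∑ i, ψ i := by
      rw [hsplit]; linarith
    rw [hdiff]
    linarith only [mul_le_mul_of_nonneg_left hsum hlam.le, hz20]
  rw [← sub_pos]
  -- nondegeneracy
  have hLW : 0 < L ∨ 0 < W := by
    by_contra hcon
    push_neg at hcon
    have hLz : L = 0 := le_antisymm hcon.1 hL0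
    have hWz : W = 0 := le_antisymm hcon.2 hW0
    apply hne
    funext i
    have hWz' : ∑ i ∈ S, (v i) ^ 2 = 0 := by rw [← hW]; exact hWz
    have hLz' : ∑ i ∈ Sᶜ, |v i| = 0 := by rw [← hL]; exact hLz
    have hvz : v i = 0 := by
      by_cases hi : i ∈ S
      · have h0 : (v i) ^ 2 = 0 := (Finset.sum_eq_zero_iff_of_nonneg
            (fun i _ => sq_nonneg (v i))).mp hWz' i hi
        exact pow_eq_zero_iff two_ne_zero |>.mp h0
      · have hi' : i ∈ Sᶜ := Finset.mem_compl.mpr hi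
        have h0 : |v i| = 0 := (Finset.sum_eq_zero_iff_of_nonneg
            (fun i _ => abs_nonneg (v i))).mp hLz' i hi'
        exact abs_eq_zero.mp h0
    have h5 := hvi i
    rw [hvz] at h5
    exact (sub_eq_zero.mp h5.symm)
  -- epsilon
  have hε : 0 < 1 - 2 * (q:ℝ) * lam * tau ^ 2 := by
    have h2q : (0:ℝ) < 2 * q * tau ^ 2 := by positivity
    have := (lt_div_iff₀ h2q).mp hlamq
    nlinarith
  have hρ4 : rho ^ 2 * (4 * (q:ℝ) ^ 4) < 1 - 2 * q * lam * tau ^ 2 := by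
    have h2q2 : (0:ℝ) < 2 * (q:ℝ) ^ 2 := by positivity
    have h1 : rho * (2 * (q:ℝ) ^ 2) < Real.sqrt (1 - 2 * q * lam * tau ^ 2) :=
      (lt_div_iff₀ h2q2).mp hrho2
    have h2 : (rho * (2 * (q:ℝ) ^ 2)) ^ 2 < (Real.sqrt (1 - 2 * q * lam * tau ^ 2)) ^ 2 := by
      apply pow_lt_pow_left₀ h1 (by positivity)
      norm_num
    rw [Real.sq_sqrt hε.le] at h2
    linarith only [h2]
  rcases lt_or_ge ((k:ℝ) * q ^ 2 * d) L with hLbig | hLsmall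
  · -- case B : L large
    refine lt_of_lt_of_le ?_ hlow2
    have h7 : (k:ℝ) * q ^ 2 * d * (d/2) < L * (d/2) :=
      mul_lt_mul_of_pos_right hLbig (by linarith)
    exact mul_pos hlam (by linarith only [h7])
  · -- case A
    have hRN := hRNSP v S hk
    rw [← hW, ← hL, ← hz2] at hRN
    by_cases hk0 : k = 0
    · exfalso
      subst hk0
      have hLz : L = 0 := by
        have : (0:ℝ) * q ^ 2 * d = 0 := by ring
        push_cast at hLsmall
        nlinarith
      have hSemp : S = ∅ := Finset.card_eq_zero.mp (Nat.le_zero.mp hk)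
      have hWz : W = 0 := by rw [hW, hSemp]; simp
      rcases hLW with h | h <;> linarith
    have hkpos : 0 < k := Nat.pos_of_ne_zero hk0
    have hk1 : (1:ℝ) ≤ (k:ℝ) := by exact_mod_cast hkpos
    set z : ℝ := Real.sqrt z2 with hzdef
    set r : ℝ := rho / Real.sqrt k with hrdef
    clear_value z r
    have hzz : z ^ 2 = z2 := by rw [hzdef]; exact Real.sq_sqrt hz20
    have hz0 : 0 ≤ z := by rw [hzdef]; exact Real.sqrt_nonneg _
    have hskpos : 0 < Real.sqrt k := Real.sqrt_pos.mpr (by linarith)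
    have hr0 : 0 < r := by rw [hrdef]; exact div_pos hrho hskpos
    have hWle : W ≤ (r * L + tau * z) ^ 2 := by
      calc W = (Real.sqrt W) ^ 2 := (Real.sq_sqrt hW0).symm
        _ ≤ (r * L + tau * z) ^ 2 := by
            apply pow_le_pow_left₀ (Real.sqrt_nonneg W) hRN
    have hr2 : r ^ 2 = rho ^ 2 / k := by
      rw [hrdef, div_pow, Real.sq_sqrt (by positivity : (0:ℝ) ≤ (k:ℝ))]
    have hkey : (q:ℝ) * r ^ 2 * L ≤ (1 - 2 * q * lam * tau ^ 2) * d / 4 := by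
      rw [hr2]
      have hkR : (0:ℝ) < (k:ℝ) := by linarith
      have hL' : rho ^ 2 / k * L ≤ rho ^ 2 * q ^ 2 * d := by
        rw [div_mul_eq_mul_div, div_le_iff₀ hkR]
        nlinarith [sq_nonneg rho]
      have hq3 : (q:ℝ) * (rho ^ 2 * q ^ 2 * d) * 4 ≤ (1 - 2 * q * lam * tau ^ 2) * d := by
        have h1 : rho ^ 2 * (4 * (q:ℝ) ^ 4) * d ≤ (1 - 2 * q * lam * tau ^ 2) * d :=
          mul_le_mul_of_nonneg_right hρ4.le hd.le
        have h2 : 0 ≤ rho ^ 2 * (q:ℝ) ^ 3 * d * ((q:ℝ) - 1) :=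
          mul_nonneg (by positivity) (by linarith)
        nlinarith [h1, h2]
      have h6 : (q:ℝ) * (rho ^ 2 / k * L) ≤ (q:ℝ) * (rho ^ 2 * q ^ 2 * d) :=
        mul_le_mul_of_nonneg_left hL' (by positivity : (0:ℝ) ≤ (q:ℝ))
      linarith only [h6, hq3]
    rcases eq_or_lt_of_le hL0 with hLz | hLpos
    · -- L = 0
      have hLz' : L = 0 := hLz.symm
      have hWpos : 0 < W := by
        rcases hLW with h | h
        · exact absurd hLz' (by linarith)
        · exact h
      have hzpos : 0 < z := by
        have h1 := hRN
        rw [hLz', mul_zero, zero_add] at h1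
        have h2 : 0 < Real.sqrt W := Real.sqrt_pos.mpr hWpos
        have h3 : 0 < tau * z := by linarith only [h1, h2]
        rcases mul_pos_iff.mp h3 with ⟨_, hzp⟩ | ⟨ht, _⟩
        · exact hzp
        · linarith
      have hWle' : W ≤ tau ^ 2 * z ^ 2 := by
        rw [hLz', mul_zero, zero_add] at hWle
        have h4 : (tau * z) ^ 2 = tau ^ 2 * z ^ 2 := by ring
        linarith only [hWle, h4]
      refine lt_of_lt_of_le ?_ hlow1
      rw [hLz']
      have h8 : lam * q * W ≤ lam * q * (tau ^ 2 * z ^ 2) :=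
        mul_le_mul_of_nonneg_left hWle' (by positivity)
      have h9 : 0 < (1 - 2 * (q:ℝ) * lam * tau ^ 2) * z ^ 2 :=
        mul_pos hε (by positivity)
      linarith only [h8, h9, hzz]
    · -- L > 0
      refine lt_of_lt_of_le ?_ hlow1
      have identity : (1 - 2 * (q:ℝ) * lam * tau ^ 2) *
            ((1/2) * z ^ 2 + lam * (d / 2 * L) - lam * q * (r * L + tau * z) ^ 2)
          = (1/2) * ((1 - 2 * (q:ℝ) * lam * tau ^ 2) * z - 2 * lam * q * r * tau * L) ^ 2
            + lam * L * ((1 - 2 * (q:ℝ) * lam * tau ^ 2) * (d / 2) - q * r ^ 2 * L) := by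
        ring
      have hbr : 0 < (1 - 2 * (q:ℝ) * lam * tau ^ 2) * (d / 2) - q * r ^ 2 * L := by
        have := mul_pos hε hd
        linarith only [hkey, this]
      have hRHSpos : 0 < (1/2) * ((1 - 2 * (q:ℝ) * lam * tau ^ 2) * z
            - 2 * lam * q * r * tau * L) ^ 2
          + lam * L * ((1 - 2 * (q:ℝ) * lam * tau ^ 2) * (d / 2) - q * r ^ 2 * L) := by
        have h1 : 0 ≤ (1/2) * ((1 - 2 * (q:ℝ) * lam * tau ^ 2) * z
            - 2 * lam * q * r * tau * L) ^ 2 := by positivity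
        have h2 : 0 < lam * L * ((1 - 2 * (q:ℝ) * lam * tau ^ 2) * (d / 2) - q * r ^ 2 * L) :=
          mul_pos (mul_pos hlam hLpos) hbr
        linarith
      have hX : 0 < (1/2) * z ^ 2 + lam * (d / 2 * L) - lam * q * (r * L + tau * z) ^ 2 := by
        by_contra hc
        push_neg at hc
        have h10 := mul_nonneg hε.le (neg_nonneg.mpr hc)
        linarith only [identity, hRHSpos, h10]
      have hmono : lam * q * W ≤ lam * q * (r * L + tau * z) ^ 2 :=
        mul_le_mul_of_nonneg_left hWle (by positivity)
      linarith only [hX, hmono, hzz]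
end

section
/- (Convexity under positive definiteness) If AᵀA − λI is positive definite, then F(x) = (1/2)‖Ax − y‖₂² + λd‖x‖₁ − (λ/2)‖x‖₂² is a strictly convex function on ℝⁿ, and if moreover y = A x̃ with x̃ ∈ {0,±d}^n k-sparse, then x̃ is the global minimizer of F over [-d,d]^n. -/
/-!
Since `y = A x̃`, `(1/2)‖Ax − y‖²` equals `(1/2)‖A(x − x̃)‖²`, which positive definiteness bounds
below by `(λ/2)‖x − x̃‖²`. This makes `F x` at least `λ ∑ᵢ φ(x̃ᵢ, xᵢ)` with the one-dimensional
`φ(t, u) = (u − t)²/2 + d|u| − u²/2 = t²/2 − tu + d|u|`, which on `[-d, d]` is minimized at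
`u = t` as soon as `t ∈ {0, ±d}`; and `λ ∑ᵢ φ(x̃ᵢ, x̃ᵢ) = F x̃`.
Strict convexity is the same positive definiteness: along a segment the smooth part of `F`
deviates from its chords by `a b (x − z)ᵀ(AᵀA − λI)(x − z) / 2`.
-/

open Matrix

noncomputable def penalizedObjective {ι κ : Type*} [Fintype ι] [Fintype κ]
    (A : Matrix κ ι ℝ) (y : κ → ℝ) (lam d : ℝ) (x : ι → ℝ) : ℝ :=
  (1 / 2) * ∑ j, ((A *ᵥ x) j - y j) ^ 2 + lam * d * ∑ i, |x i| - (lam / 2) * ∑ i, x i ^ 2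

theorem strictConvexOn_univ_of_eq_convexComb_sub {E : Type*} [AddCommGroup E] [Module ℝ E]
    {f Q : E → ℝ} (hQ : ∀ v, v ≠ 0 → 0 < Q v)
    (hf : ∀ (x z : E) (a b : ℝ), a + b = 1 →
      f (a • x + b • z) = a * f x + b * f z - a * b * Q (x - z)) :
    StrictConvexOn ℝ Set.univ f := by
  refine ⟨convex_univ, fun x _ z _ hxz a b ha hb hab => ?_⟩
  rw [hf x z a b hab, smul_eq_mul, smul_eq_mul]
  have := mul_pos (mul_pos ha hb) (hQ _ (sub_ne_zero.mpr hxz))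
  linarith

section

variable {ι κ : Type*} [Fintype ι] [Fintype κ]

theorem sum_convexComb_sub_sq {a b : ℝ} (hab : a + b = 1) (u w c : κ → ℝ) :
    ∑ j, (a * u j + b * w j - c j) ^ 2 =
      a * ∑ j, (u j - c j) ^ 2 + b * ∑ j, (w j - c j) ^ 2 - a * b * ∑ j, (u j - w j) ^ 2 := by
  obtain rfl : b = 1 - a := by linarith
  simp only [Finset.mul_sum, ← Finset.sum_add_distrib, ← Finset.sum_sub_distrib]
  exact Finset.sum_congr rfl fun j _ => by ring

theorem convexOn_univ_sum_abs : ConvexOn ℝ Set.univ fun x : ι → ℝ => ∑ i, |x i| := by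
  refine ⟨convex_univ, fun x _ z _ a b ha hb _ => ?_⟩
  simp only [Pi.add_apply, Pi.smul_apply, smul_eq_mul, Finset.mul_sum, ← Finset.sum_add_distrib]
  refine Finset.sum_le_sum fun i _ => ?_
  calc |a * x i + b * z i| ≤ |a * x i| + |b * z i| := abs_add_le _ _
    _ = a * |x i| + b * |z i| := by rw [abs_mul, abs_mul, abs_of_nonneg ha, abs_of_nonneg hb]

theorem mul_abs_sub_sq_div_two_le_of_mem_Icc {d t u : ℝ} (ht : t = 0 ∨ t = -d ∨ t = d)
    (hu : u ∈ Set.Icc (-d) d) : d * |t| - t ^ 2 / 2 ≤ (u - t) ^ 2 / 2 + d * |u| - u ^ 2 / 2 := by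
  obtain ⟨hl, hr⟩ := hu
  have hd : 0 ≤ d := by linarith
  rcases ht with rfl | rfl | rfl
  · simp only [abs_zero]; nlinarith [abs_nonneg u]
  · rw [abs_neg, abs_of_nonneg hd]; nlinarith [neg_abs_le u]
  · rw [abs_of_nonneg hd]; nlinarith [le_abs_self u]

variable [DecidableEq ι]

theorem dotProduct_gram_sub_smul_one_mulVec (A : Matrix κ ι ℝ) (lam : ℝ) (v : ι → ℝ) :
    v ⬝ᵥ ((Aᵀ * A - lam • (1 : Matrix ι ι ℝ)) *ᵥ v) = ∑ j, (A *ᵥ v) j ^ 2 - lam * ∑ i, v i ^ 2 := by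
  rw [sub_mulVec, dotProduct_sub, ← mulVec_mulVec, dotProduct_mulVec, vecMul_transpose,
    smul_mulVec, one_mulVec, dotProduct_smul]
  simp [dotProduct, sq, Finset.mul_sum]

variable {A : Matrix κ ι ℝ} {lam : ℝ}
variable (hpd : ∀ v : ι → ℝ, v ≠ 0 → 0 < v ⬝ᵥ ((Aᵀ * A - lam • (1 : Matrix ι ι ℝ)) *ᵥ v))
include hpd

theorem mul_sum_sq_le_sum_sq_mulVec (v : ι → ℝ) : lam * ∑ i, v i ^ 2 ≤ ∑ j, (A *ᵥ v) j ^ 2 := by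
  rcases eq_or_ne v 0 with rfl | hv
  · simp
  · have := hpd v hv
    rw [dotProduct_gram_sub_smul_one_mulVec] at this
    linarith

theorem strictConvexOn_univ_half_sum_sq_sub (y : κ → ℝ) :
    StrictConvexOn ℝ Set.univ fun x : ι → ℝ =>
      (1 / 2) * ∑ j, ((A *ᵥ x) j - y j) ^ 2 - (lam / 2) * ∑ i, x i ^ 2 := by
  refine strictConvexOn_univ_of_eq_convexComb_sub
    (Q := fun v => v ⬝ᵥ ((Aᵀ * A - lam • (1 : Matrix ι ι ℝ)) *ᵥ v) / 2)
    (fun v hv => half_pos (hpd v hv)) fun x z a b hab => ?_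
  have hx := sum_convexComb_sub_sq hab x z 0
  have hAx := sum_convexComb_sub_sq hab (A *ᵥ x) (A *ᵥ z) y
  simp only [Pi.zero_apply, sub_zero] at hx
  simp only [dotProduct_gram_sub_smul_one_mulVec]
  simp only [mulVec_add, mulVec_smul, mulVec_sub,
    Pi.add_apply, Pi.smul_apply, Pi.sub_apply, smul_eq_mul, hx, hAx]
  ring

theorem strictConvexOn_penalizedObjective {d : ℝ} (hlamd : 0 ≤ lam * d) (y : κ → ℝ) :
    StrictConvexOn ℝ Set.univ (penalizedObjective A y lam d) := by
  have hsplit : penalizedObjective A y lam d =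
      (fun x => (1 / 2) * ∑ j, ((A *ᵥ x) j - y j) ^ 2 - (lam / 2) * ∑ i, x i ^ 2) +
        (lam * d) • fun x => ∑ i, |x i| := by
    funext x
    simp only [penalizedObjective, Pi.add_apply, Pi.smul_apply, smul_eq_mul]
    ring
  rw [hsplit]
  exact (strictConvexOn_univ_half_sum_sq_sub hpd y).add_convexOn
    (convexOn_univ_sum_abs.smul hlamd)

theorem penalizedObjective_le_of_mem_Icc (hlam : 0 ≤ lam) {d : ℝ} {xt x : ι → ℝ}
    (hxt : ∀ i, xt i = 0 ∨ xt i = -d ∨ xt i = d) (hx : ∀ i, x i ∈ Set.Icc (-d) d) :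
    penalizedObjective A (A *ᵥ xt) lam d xt ≤ penalizedObjective A (A *ᵥ xt) lam d x := by
  have hA := mul_sum_sq_le_sum_sq_mulVec hpd (x - xt)
  simp only [mulVec_sub, Pi.sub_apply] at hA
  calc penalizedObjective A (A *ᵥ xt) lam d xt = lam * ∑ i, (d * |xt i| - xt i ^ 2 / 2) := by
        simp only [penalizedObjective, sub_self, ne_eq, OfNat.ofNat_ne_zero, not_false_eq_true,
          zero_pow, Finset.sum_const_zero, mul_zero, zero_add, Finset.mul_sum,
          ← Finset.sum_sub_distrib]
        exact Finset.sum_congr rfl fun i _ => by ring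
    _ ≤ lam * ∑ i, ((x i - xt i) ^ 2 / 2 + d * |x i| - x i ^ 2 / 2) :=
        mul_le_mul_of_nonneg_left
          (Finset.sum_le_sum fun i _ => mul_abs_sub_sq_div_two_le_of_mem_Icc (hxt i) (hx i)) hlam
    _ = (lam / 2) * ∑ i, (x i - xt i) ^ 2 + lam * d * ∑ i, |x i| - (lam / 2) * ∑ i, x i ^ 2 := by
        simp only [Finset.mul_sum, ← Finset.sum_add_distrib, ← Finset.sum_sub_distrib]
        exact Finset.sum_congr rfl fun i _ => by ring
    _ ≤ penalizedObjective A (A *ᵥ xt) lam d x := by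
        unfold penalizedObjective
        linarith

end

theorem stmt_17 (m n k : ℕ) (d lam : ℝ) (hd : 0 < d) (hlam : 0 < lam)
    (A : Matrix (Fin m) (Fin n) ℝ)
    (hpd : ∀ v : Fin n → ℝ, v ≠ 0 →
      0 < dotProduct v ((Aᵀ * A - lam • (1 : Matrix (Fin n) (Fin n) ℝ)).mulVec v))
    (y : Fin m → ℝ)
    (F : (Fin n → ℝ) → ℝ)
    (hF : ∀ x, F x = (1 / 2) * (∑ j, (A.mulVec x j - y j) ^ 2)
        + lam * d * (∑ i, |x i|) - (lam / 2) * (∑ i, (x i) ^ 2)) :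
    StrictConvexOn ℝ Set.univ F ∧
    (∀ xt : Fin n → ℝ, (∀ i, xt i = 0 ∨ xt i = -d ∨ xt i = d) →
      ({i | xt i ≠ 0} : Finset (Fin n)).card ≤ k →
      y = A.mulVec xt →
      ∀ x : Fin n → ℝ, (∀ i, x i ∈ Set.Icc (-d) d) → F xt ≤ F x) := by
  obtain rfl : F = penalizedObjective A y lam d := funext hF
  refine ⟨strictConvexOn_penalizedObjective hpd (mul_pos hlam hd).le y, ?_⟩
  rintro xt hxt - rfl x hx
  exact penalizedObjective_le_of_mem_Icc hpd hlam.le hxt hx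
end
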